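/- Let A be an abelian length category, X, Y indecomposable, and X ⊂ Y a Gabriel-Roiter inclusion (i.e., μ(X) = max{μ(Y') : Y' ⊂ Y proper indecomposable subobject}). If X ⊆ U ⊂ Y with U a proper subobject of Y, then X is a direct summand of U. -/

import Mathlib

open CategoryTheory CategoryTheory.Limits

/-- The lexicographic order on finite subsets of ℕ:
`X ≤ Y` iff `min (Y \ X) ≤ min (X \ Y)`, with `min ∅ = ⊤`. -/
def lexLE (X Y : Finset ℕ) : Prop :=
  (Y \ X).min ≤ (X \ Y).min

/-- Strict lexicographic order. -/
def lexLT (X Y : Finset ℕ) : Prop :=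
  lexLE X Y ∧ ¬ lexLE Y X

variable {C : Type*} [Category C] [Abelian C]

/-- `n` is the composition length of the object `X`: there is a maximal
strictly increasing chain of subobjects of `X` from `⊥` to `⊤` with `n`
steps, and every strictly increasing chain of subobjects has at most
`n` steps. -/
def ObjLength (X : C) (n : ℕ) : Prop :=
  (∃ f : Fin (n + 1) → Subobject X, StrictMono f ∧ f 0 = ⊥ ∧ f (Fin.last n) = ⊤) ∧
  ∀ (m : ℕ) (f : Fin (m + 1) → Subobject X), StrictMono f → m ≤ n

/-- `A` is the set of lengths of a finite chain of indecomposable subobjects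
of `X` ending in `X` itself. -/
def IsGRChainVal (len : C → ℕ) (X : C) (A : Finset ℕ) : Prop :=
  ∃ s : Finset (Subobject X),
    IsChain (· ≤ ·) (s : Set (Subobject X)) ∧
    (⊤ : Subobject X) ∈ s ∧
    (∀ t ∈ s, Indecomposable ((t : Subobject X) : C)) ∧
    s.image (fun t : Subobject X => len ((t : Subobject X) : C)) = A

/-- `mu` is the Gabriel-Roiter measure associated to the length function
`len`: for each indecomposable `X`, `mu X` is the lexicographic maximum of
the sets of lengths along chains of indecomposable subobjects of `X`. -/
def IsGRMeasure (len : C → ℕ) (mu : C → Finset ℕ) : Prop :=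
  ∀ X : C, Indecomposable X →
    IsGRChainVal len X (mu X) ∧
    ∀ A : Finset ℕ, IsGRChainVal len X A → lexLE A (mu X)

/-- `X` is a Gabriel-Roiter predecessor of `Y`: both are indecomposable,
`X` is a proper subobject of `Y`, and `mu X` attains the maximum of the
Gabriel-Roiter measures of the proper indecomposable subobjects of `Y`. -/
def IsGRPred (mu : C → Finset ℕ) (X Y : C) : Prop :=
  Indecomposable X ∧ Indecomposable Y ∧
  (∃ f : X ⟶ Y, Mono f ∧ ¬ IsIso f) ∧
  ∀ t : Subobject Y, t ≠ ⊤ → Indecomposable ((t : Subobject Y) : C) →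
    lexLE (mu ((t : Subobject Y) : C)) (mu X)

/-!
Split `U` into indecomposable summands. Each is a proper subobject of `Y`, hence of measure at
most `mu X`. Inducting on the length of `U`, either some component `X ⟶ Uᵢ` of the inclusion is
mono, and then `mu Uᵢ ≥ insert (len Uᵢ) (mu X)` forces `X ≅ Uᵢ`, or `X` embeds into the sum of
the images of its components, a sum of indecomposables of length `< len X`.

The second case is impossible (Gabriel's main property). Given an indecomposable `W` whose
measure is an initial segment of `M := mu X`, embedded into a sum of short indecomposables of
measure `≤ M`, restrict the embedding to the Gabriel-Roiter submodule `W'` of `W`. A component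
`W' ⟶ P` that is still mono is either an isomorphism, which makes `W'` a summand of `W`, or has
`len W' < len P < len W`, and then `mu P ≥ insert (len P) (mu W')` beats `M` lexicographically.
So all components factor through their images, which are shorter than `W'`, and we descend
to `W'`.
-/

namespace GabrielRoiter

theorem lexLE_iff {A B : Finset ℕ} :
    lexLE A B ↔ ∀ a ∈ A, a ∉ B → ∃ b ∈ B, b ∉ A ∧ b ≤ a := by
  simp only [lexLE, Finset.le_min_iff, Finset.mem_sdiff, and_imp]
  refine forall₂_congr fun a ha => imp_congr_right fun haB => ?_
  rw [Finset.min_eq_inf_withTop, Finset.inf_le_iff (WithTop.coe_lt_top a)]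
  simp [and_assoc]

theorem lexLE_iff_toColex {A B : Finset ℕ} :
    lexLE A B ↔ toColex (A.map OrderDual.toDual.toEmbedding) ≤
      toColex (B.map OrderDual.toDual.toEmbedding) := by
  simp [lexLE_iff, Finset.Colex.toColex_le_toColex, OrderDual.forall, OrderDual.exists]

theorem lexLE_trans {A B D : Finset ℕ} (h₁ : lexLE A B) (h₂ : lexLE B D) : lexLE A D :=
  lexLE_iff_toColex.2 ((lexLE_iff_toColex.1 h₁).trans (lexLE_iff_toColex.1 h₂))

theorem lexLE_antisymm {A B : Finset ℕ} (h₁ : lexLE A B) (h₂ : lexLE B A) : A = B :=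
  Finset.map_injective _ (toColex.injective (le_antisymm (lexLE_iff_toColex.1 h₁)
    (lexLE_iff_toColex.1 h₂)))

theorem subset_of_lexLE_of_subset {A B : Finset ℕ} (h : lexLE A B) (hBA : B ⊆ A) : A ⊆ B := by
  intro a ha
  by_contra haB
  obtain ⟨b, hb, hbA, -⟩ := lexLE_iff.1 h a ha haB
  exact hbA (hBA hb)

theorem lexLE_insert_insert_iff {A B : Finset ℕ} {m : ℕ} (hA : m ∉ A) (hB : m ∉ B) :
    lexLE (insert m A) (insert m B) ↔ lexLE A B := by
  simp only [lexLE, Finset.insert_sdiff_insert, Finset.sdiff_insert_of_notMem hA,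
    Finset.sdiff_insert_of_notMem hB]

theorem not_lexLE_insert_filter_lt {M : Finset ℕ} {c w : ℕ} (hcw : c < w)
    (hc : c ∉ M) : ¬ lexLE (insert c (M.filter (· < w))) M := by
  intro h
  obtain ⟨b, hbM, hb, hbc⟩ := lexLE_iff.1 h c (Finset.mem_insert_self _ _) hc
  exact hb (Finset.mem_insert_of_mem (Finset.mem_filter.2 ⟨hbM, by omega⟩))

theorem erase_filter_le (M : Finset ℕ) (n : ℕ) :
    (M.filter (· ≤ n)).erase n = M.filter (· < n) := by
  ext a
  simp only [Finset.mem_erase, Finset.mem_filter, lt_iff_le_and_ne]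
  tauto

theorem filter_lt_eq_filter_le {M : Finset ℕ} {k n : ℕ} (hkn : k < n)
    (h : ∀ a ∈ M.filter (· < n), a ≤ k) : M.filter (· < n) = M.filter (· ≤ k) := by
  ext a
  simp only [Finset.mem_filter] at h ⊢
  exact ⟨fun ha => ⟨ha.1, h a ha⟩, fun ha => ⟨ha.1, ha.2.trans_lt hkn⟩⟩

omit [Abelian C] in
theorem map_obj_strictMono {A B : C} (m : A ⟶ B) [Mono m] : StrictMono (Subobject.map m).obj :=
  (Subobject.map m).monotone.strictMono_of_injective (Subobject.map_obj_injective m)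

theorem le_of_pullback_obj_le {A B : C} (q : A ⟶ B) [Epi q] {t t' : Subobject B}
    (h : (Subobject.pullback q).obj t ≤ (Subobject.pullback q).obj t') : t ≤ t' := by
  have : Epi (Subobject.pullbackπ q t) :=
    Abelian.epi_fst_of_isLimit _ _ (Subobject.isPullback q t).isLimit
  have := strongEpi_of_epi (Subobject.pullbackπ q t)
  have sq : CommSq (Subobject.ofLE _ _ h ≫ Subobject.pullbackπ q t') (Subobject.pullbackπ q t)
      t'.arrow t.arrow := ⟨by
    rw [Category.assoc, (Subobject.isPullback q t').w, Subobject.ofLE_arrow_assoc,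
      (Subobject.isPullback q t).w]⟩
  exact Subobject.le_of_comm sq.lift sq.fac_right

theorem pullback_obj_strictMono {A B : C} (q : A ⟶ B) [Epi q] :
    StrictMono (Subobject.pullback q).obj :=
  (Subobject.pullback q).monotone.strictMono_of_injective fun _ _ h =>
    (le_of_pullback_obj_le q h.le).antisymm (le_of_pullback_obj_le q h.ge)

theorem bot_lt_pullback_obj_bot {A B : C} (q : A ⟶ B) (hq : ¬ Mono q) :
    ⊥ < (Subobject.pullback q).obj ⊥ := by
  refine bot_lt_iff_ne_bot.2 fun h => hq (Preadditive.mono_of_cancel_zero _ fun g hg => ?_)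
  have hfac : ((Subobject.pullback q).obj ⊥).Factors g := by
    obtain ⟨l, -, hl⟩ := (Subobject.isPullback q ⊥).exists_lift 0 g (by simp [hg])
    exact hl ▸ Subobject.factors_comp_arrow l
  rwa [h, Subobject.bot_factors_iff_zero] at hfac

theorem indecomposable_of_iso {A B : C} (e : A ≅ B) (hA : Indecomposable A) : Indecomposable B :=
  ⟨fun hB => hA.1 (hB.of_iso e), fun V W e' => hA.2 V W (e ≪≫ e')⟩

theorem exists_biprod_iso_of_not_indecomposable {U : C} (hU : ¬ IsZero U)
    (h : ¬ Indecomposable U) : ∃ V W : C, Nonempty (U ≅ V ⊞ W) ∧ ¬ IsZero V ∧ ¬ IsZero W := by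
  simp only [Indecomposable, hU, not_false_eq_true, true_and, not_forall, not_or] at h
  obtain ⟨V, W, e, hV, hW⟩ := h
  exact ⟨V, W, ⟨e⟩, hV, hW⟩

theorem not_isZero_of_ne_bot {B : C} {t : Subobject B} (ht : t ≠ ⊥) :
    ¬ IsZero ((t : Subobject B) : C) :=
  fun hz => ht (le_bot_iff.1 (Subobject.le_of_comm 0 (hz.eq_of_src _ _)))

noncomputable def biprodIsoOfIsSplitMono {A B : C} (f : A ⟶ B) [IsSplitMono f] :
    B ≅ A ⊞ cokernel f :=
  biprod.uniqueUpToIso _ _ (isBilimitBinaryBiconeOfIsSplitMonoOfCokernel (cokernelIsCokernel f))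

theorem isIso_of_isSplitMono_of_indecomposable {A B : C} (f : A ⟶ B) [IsSplitMono f]
    (hA : ¬ IsZero A) (hB : Indecomposable B) : IsIso f := by
  have : Epi f := Preadditive.epi_of_isZero_cokernel f
    ((hB.2 _ _ (biprodIsoOfIsSplitMono f)).resolve_left hA)
  exact isIso_of_mono_of_epi f

omit [Abelian C] in
theorem isSplitMono_of_isSplitMono_comp {A B D : C} (f : A ⟶ B) (g : B ⟶ D)
    [IsSplitMono (f ≫ g)] : IsSplitMono f :=
  IsSplitMono.mk' ⟨g ≫ retraction (f ≫ g), by rw [← Category.assoc, IsSplitMono.id]⟩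

theorem mono_biprod_lift_factorThruImage {X V W : C} (f : X ⟶ V ⊞ W) [Mono f] :
    Mono (biprod.lift (Abelian.factorThruImage (f ≫ biprod.fst))
      (Abelian.factorThruImage (f ≫ biprod.snd))) := by
  have hfac : biprod.lift (Abelian.factorThruImage (f ≫ biprod.fst))
      (Abelian.factorThruImage (f ≫ biprod.snd)) ≫
      biprod.map (Abelian.image.ι (f ≫ biprod.fst)) (Abelian.image.ι (f ≫ biprod.snd)) = f := by
    ext <;> simp
  have : Mono (_ ≫ _) := hfac ▸ ‹Mono f›
  exact mono_of_mono _ (biprod.map (Abelian.image.ι _) (Abelian.image.ι _))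

inductive IsSumOf (Q : ObjectProperty C) : C → Prop
  | zero {T : C} : IsZero T → IsSumOf Q T
  | of {T : C} : Q T → IsSumOf Q T
  | biprod {T A B : C} : IsSumOf Q A → IsSumOf Q B → (T ≅ A ⊞ B) → IsSumOf Q T

theorem IsSumOf.mono {Q Q' : ObjectProperty C} (h : Q ≤ Q') {T : C} (hT : IsSumOf Q T) :
    IsSumOf Q' T := by
  induction hT with
  | zero hz => exact .zero hz
  | of hQ => exact .of (h _ hQ)
  | biprod _ _ e hA hB => exact .biprod hA hB e

theorem IsSumOf.exists_of_not_isZero {Q : ObjectProperty C} {T : C} (hT : IsSumOf Q T)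
    (hT0 : ¬ IsZero T) : ∃ P, Q P := by
  induction hT with
  | zero hz => exact absurd hz hT0
  | of hQ => exact ⟨_, hQ⟩
  | @biprod T A B _ _ e hA hB =>
    by_cases hA0 : IsZero A
    · exact hB fun hB0 => hT0 (((biprod_isZero_iff A B).2 ⟨hA0, hB0⟩).of_iso e)
    · exact hA hA0

theorem IsSumOf.exists_factorization {Q Q' : ObjectProperty C} {A W : C} (j : A ⟶ W)
    (hQ : ∀ P, Q P → ∀ ρ : W ⟶ P,
      ∃ (D : C) (ψ : A ⟶ D) (m : D ⟶ P), Mono m ∧ ψ ≫ m = j ≫ ρ ∧ IsSumOf Q' D)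
    {T : C} (hT : IsSumOf Q T) (ρ : W ⟶ T) :
    ∃ (T' : C) (ψ : A ⟶ T') (m : T' ⟶ T), Mono m ∧ ψ ≫ m = j ≫ ρ ∧ IsSumOf Q' T' := by
  induction hT with
  | zero hz => exact ⟨_, j ≫ ρ, 𝟙 _, inferInstance, Category.comp_id _, .zero hz⟩
  | of hP => exact hQ _ hP ρ
  | biprod _ _ e ihA ihB =>
    obtain ⟨A', ψA, mA, _, hA, hA'⟩ := ihA (ρ ≫ e.hom ≫ biprod.fst)
    obtain ⟨B', ψB, mB, _, hB, hB'⟩ := ihB (ρ ≫ e.hom ≫ biprod.snd)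
    refine ⟨A' ⊞ B', biprod.lift ψA ψB, biprod.map mA mB ≫ e.inv, inferInstance, ?_,
      .biprod hA' hB' (Iso.refl _)⟩
    rw [← cancel_mono e.hom]
    ext <;> simp [hA, hB]

def shortIndecomposables (len : C → ℕ) (S : ObjectProperty C) (n : ℕ) : ObjectProperty C :=
  fun P => Indecomposable P ∧ S P ∧ len P < n

def properSubobjects (Y : C) : ObjectProperty C :=
  fun P => ∃ m : P ⟶ Y, Mono m ∧ ¬ IsIso m

instance (Y : C) : (properSubobjects Y).IsClosedUnderSubobjects where
  prop_of_mono i _ := fun ⟨m, _, hm⟩ => ⟨i ≫ m, mono_comp _ _, fun _ =>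
    hm (have : Epi m := epi_of_epi i m; isIso_of_mono_of_epi m)⟩

section Length

variable {len : C → ℕ} (hlen : ∀ Z : C, ObjLength Z (len Z))
include hlen

theorem len_le_of_strictMono {A B : C} {φ : Subobject A → Subobject B} (hφ : StrictMono φ) :
    len A ≤ len B := by
  obtain ⟨⟨f, hf, -, -⟩, -⟩ := hlen A
  exact (hlen B).2 _ (φ ∘ f) (hφ.comp hf)

theorem len_lt_of_strictMono_of_bot_lt {A B : C} {φ : Subobject A → Subobject B}
    (hφ : StrictMono φ) (hbot : ∀ t, ⊥ < φ t) : len A < len B := by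
  obtain ⟨⟨f, hf, -, -⟩, -⟩ := hlen A
  exact (hlen B).2 _ (Fin.cons ⊥ (φ ∘ f)) (Fin.strictMono_cons.2 ⟨fun _ => hbot _, hφ.comp hf⟩)

theorem len_lt_of_strictMono_of_lt_top {A B : C} {φ : Subobject A → Subobject B}
    (hφ : StrictMono φ) (htop : ∀ t, φ t < ⊤) : len A < len B := by
  obtain ⟨⟨f, hf, -, -⟩, -⟩ := hlen A
  refine (hlen B).2 _ (Fin.insertNth (Fin.last _) ⊤ (φ ∘ f)) ?_
  refine (Fin.strictMono_insertNth_iff _ _ _).2 ⟨hφ.comp hf, fun _ _ => htop _, fun i hi => ?_⟩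
  exact absurd hi (Fin.castSucc_lt_last i).not_ge

theorem len_le_of_mono {A B : C} (m : A ⟶ B) [Mono m] : len A ≤ len B :=
  len_le_of_strictMono hlen (map_obj_strictMono m)

theorem len_congr {A B : C} (e : A ≅ B) : len A = len B :=
  (len_le_of_mono hlen e.hom).antisymm (len_le_of_mono hlen e.inv)

theorem len_lt_of_mono_of_not_isIso {A B : C} (m : A ⟶ B) [Mono m] (hm : ¬ IsIso m) :
    len A < len B := by
  refine len_lt_of_strictMono_of_lt_top hlen (map_obj_strictMono m) fun t => ?_
  calc (Subobject.map m).obj t ≤ (Subobject.map m).obj ⊤ := (Subobject.map m).monotone le_top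
    _ = Subobject.mk m := Subobject.map_top m
    _ < ⊤ := lt_top_iff_ne_top.2 fun h => hm ((Subobject.isIso_iff_mk_eq_top m).2 h)

theorem len_lt_of_ne_top {B : C} {t : Subobject B} (ht : t ≠ ⊤) : len (t : C) < len B :=
  len_lt_of_mono_of_not_isIso hlen t.arrow fun h => ht ((Subobject.isIso_arrow_iff_eq_top t).1 h)

theorem isIso_of_mono_of_len_le {A B : C} (m : A ⟶ B) [Mono m] (h : len B ≤ len A) : IsIso m := by
  by_contra hm
  exact (len_lt_of_mono_of_not_isIso hlen m hm).not_ge h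

theorem isZero_of_len_eq_zero {A : C} (h : len A = 0) : IsZero A := by
  by_contra hA
  have := Subobject.nontrivial_of_not_isZero hA
  obtain ⟨⟨f, -, hbot, htop⟩, -⟩ := hlen A
  have hlast : Fin.last (len A) = 0 := Fin.ext h
  exact bot_ne_top (hbot.symm.trans (hlast ▸ htop))

theorem len_lt_of_epi_of_not_mono {A B : C} (q : A ⟶ B) [Epi q] (hq : ¬ Mono q) :
    len B < len A :=
  len_lt_of_strictMono_of_bot_lt hlen (pullback_obj_strictMono q) fun _ =>
    (bot_lt_pullback_obj_bot q hq).trans_le ((Subobject.pullback q).monotone bot_le)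

theorem len_image_lt {A B : C} (g : A ⟶ B) (hg : ¬ Mono g) : len (Abelian.image g) < len A :=
  len_lt_of_epi_of_not_mono hlen (Abelian.factorThruImage g) fun _ =>
    hg (Abelian.image.fac g ▸ mono_comp _ _)

theorem len_lt_of_biprod_iso {U V W : C} (e : U ≅ V ⊞ W) (hW : ¬ IsZero W) : len V < len U := by
  refine len_lt_of_mono_of_not_isIso hlen (biprod.inl ≫ e.inv) fun h => hW ?_
  have : IsIso (biprod.inl : V ⟶ V ⊞ W) := IsIso.of_isIso_comp_right _ e.inv
  exact (Biprod.isIso_inl_iff_isZero V W).1 this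

theorem isSumOf_indecomposable (U : C) :
    IsSumOf (fun P => Indecomposable P ∧ ∃ m : P ⟶ U, Mono m) U := by
  induction h : len U using Nat.strong_induction_on generalizing U with
  | _ n ih =>
  by_cases hU0 : IsZero U
  · exact .zero hU0
  by_cases hU : Indecomposable U
  · exact .of ⟨hU, 𝟙 U, inferInstance⟩
  obtain ⟨V, W, ⟨e⟩, hV, hW⟩ := exists_biprod_iso_of_not_indecomposable hU0 hU
  have hV' := ih _ (h ▸ len_lt_of_biprod_iso hlen e hW) V rfl
  have hW' := ih _ (h ▸ len_lt_of_biprod_iso hlen (e ≪≫ biprod.braiding V W) hV) W rfl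
  refine .biprod (hV'.mono ?_) (hW'.mono ?_) e
  · rintro P ⟨hP, m, _⟩
    exact ⟨hP, m ≫ biprod.inl ≫ e.inv, inferInstance⟩
  · rintro P ⟨hP, m, _⟩
    exact ⟨hP, m ≫ biprod.inr ≫ e.inv, inferInstance⟩

theorem isSumOf_image_of_not_mono (S : ObjectProperty C) [S.IsClosedUnderSubobjects] {A P : C}
    (g : A ⟶ P) (hP : S P) (hg : ¬ Mono g) :
    IsSumOf (shortIndecomposables len S (len A)) (Abelian.image g) := by
  refine (isSumOf_indecomposable hlen _).mono fun Q ⟨hQ, m, _⟩ => ⟨hQ, ?_, ?_⟩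
  · exact S.prop_of_mono (m ≫ Abelian.image.ι g) hP
  · exact (len_le_of_mono hlen m).trans_lt (len_image_lt hlen g hg)

theorem exists_indecomposable_mono_of_two_le_len {B : C} (h2 : 2 ≤ len B) :
    ∃ (P : C) (m : P ⟶ B), Mono m ∧ ¬ IsIso m ∧ Indecomposable P := by
  obtain ⟨⟨f, hf, hbot, htop⟩, -⟩ := hlen B
  let t := f ⟨1, by omega⟩
  have hbt : ⊥ < t := hbot ▸ hf (Fin.mk_lt_mk.2 Nat.one_pos)
  have htt : t < ⊤ := htop ▸ hf (Fin.mk_lt_mk.2 (by omega))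
  obtain ⟨P, hP, m, _⟩ := (isSumOf_indecomposable hlen (t : C)).exists_of_not_isZero
    (not_isZero_of_ne_bot hbt.ne')
  refine ⟨P, m ≫ t.arrow, inferInstance, fun h => ?_, hP⟩
  have := len_congr hlen (asIso (m ≫ t.arrow))
  have := len_le_of_mono hlen m
  have := len_lt_of_ne_top hlen htt.ne
  omega

end Length

section Measure

variable {len : C → ℕ} (hlen : ∀ Z : C, ObjLength Z (len Z))
include hlen

theorem IsGRChainVal.len_mem {A : C} {S : Finset ℕ} (hS : IsGRChainVal len A S) : len A ∈ S := by
  obtain ⟨s, -, htop, -, rfl⟩ := hS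
  exact Finset.mem_image.2 ⟨⊤, htop, len_congr hlen (asIso (⊤ : Subobject A).arrow)⟩

theorem IsGRChainVal.le_len {A : C} {S : Finset ℕ} (hS : IsGRChainVal len A S) {a : ℕ}
    (ha : a ∈ S) : a ≤ len A := by
  obtain ⟨s, -, -, -, rfl⟩ := hS
  obtain ⟨t, -, rfl⟩ := Finset.mem_image.1 ha
  exact len_le_of_mono hlen t.arrow

theorem IsGRChainVal.insert_of_mono {A B : C} (m : A ⟶ B) [Mono m] (hB : Indecomposable B)
    {S : Finset ℕ} (hS : IsGRChainVal len A S) : IsGRChainVal len B (insert (len B) S) := by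
  classical
  obtain ⟨s, hs, -, hind, rfl⟩ := hS
  let φ : Subobject A → Subobject B := fun t => Subobject.mk (t.arrow ≫ m)
  have hφ : Monotone φ := fun t t' h => Subobject.mk_le_mk_of_comm (Subobject.ofLE t t' h) (by simp)
  refine ⟨insert ⊤ (s.image φ), ?_, Finset.mem_insert_self _ _, ?_, ?_⟩
  · rw [Finset.coe_insert, Finset.coe_image]
    exact (hφ.isChain_image hs).insert fun _ _ _ => Or.inr le_top
  · simp only [Finset.mem_insert, Finset.mem_image]
    rintro t (rfl | ⟨u, hu, rfl⟩)
    · exact indecomposable_of_iso (asIso (⊤ : Subobject B).arrow).symm hB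
    · exact indecomposable_of_iso (Subobject.underlyingIso _).symm (hind u hu)
  · rw [Finset.image_insert, Finset.image_image, len_congr hlen (asIso (⊤ : Subobject B).arrow)]
    exact congrArg _ (Finset.image_congr fun u _ => len_congr hlen (Subobject.underlyingIso _))

theorem isGRChainVal_of_isGreatest {B : C} {s : Finset (Subobject B)} {w : Subobject B}
    (hs : IsChain (· ≤ ·) (s : Set (Subobject B))) (hw : IsGreatest s w)
    (hind : ∀ t ∈ s, Indecomposable ((t : Subobject B) : C)) :
    IsGRChainVal len (w : C) (s.image fun t => len ((t : Subobject B) : C)) := by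
  classical
  let r : Subobject B → Subobject (w : C) :=
    fun u => (Subobject.subobjectOrderIso w).symm ⟨u ⊓ w, Set.mem_Iic.2 inf_le_right⟩
  have hr : Monotone r := fun u v h =>
    (Subobject.subobjectOrderIso w).symm.monotone (Subtype.mk_le_mk.2 (inf_le_inf_right w h))
  have hiso (u) (hu : u ∈ s) : Nonempty (((r u : Subobject (w : C)) : C) ≅ (u : C)) :=
    ⟨(Subobject.underlyingIso _).symm ≪≫ Subobject.isoOfEq _ u
      (show (Subobject.subobjectOrderIso w (r u)).1 = u by simp [r, inf_eq_left.2 (hw.2 hu)])⟩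
  refine ⟨s.image r, ?_, Finset.mem_image.2 ⟨w, hw.1, ?_⟩, ?_, ?_⟩
  · rw [Finset.coe_image]
    exact hr.isChain_image hs
  · simp only [r, inf_idem]
    exact (Subobject.subobjectOrderIso w).symm.map_top
  · simp only [Finset.mem_image]
    rintro t ⟨u, hu, rfl⟩
    exact indecomposable_of_iso (hiso u hu).some.symm (hind u hu)
  · rw [Finset.image_image]
    exact Finset.image_congr fun u hu => len_congr hlen (hiso u hu).some

variable {mu : C → Finset ℕ} (hmu : IsGRMeasure len mu)
include hmu

theorem len_mem_mu {A : C} (hA : Indecomposable A) : len A ∈ mu A :=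
  IsGRChainVal.len_mem hlen (hmu A hA).1

theorem le_len_of_mem_mu {A : C} (hA : Indecomposable A) {a : ℕ} (ha : a ∈ mu A) : a ≤ len A :=
  IsGRChainVal.le_len hlen (hmu A hA).1 ha

theorem lexLE_insert_mu_of_mono {A B : C} (m : A ⟶ B) [Mono m] (hA : Indecomposable A)
    (hB : Indecomposable B) : lexLE (insert (len B) (mu A)) (mu B) :=
  (hmu B hB).2 _ (IsGRChainVal.insert_of_mono hlen m hB (hmu A hA).1)

theorem mu_congr {A B : C} (e : A ≅ B) (hA : Indecomposable A) : mu A = mu B := by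
  have hB := indecomposable_of_iso e hA
  have key {A B : C} (e : A ≅ B) (hA : Indecomposable A) (hB : Indecomposable B) :
      lexLE (mu A) (mu B) := by
    have := lexLE_insert_mu_of_mono hlen hmu e.hom hA hB
    rwa [← len_congr hlen e, Finset.insert_eq_of_mem (len_mem_mu hlen hmu hA)] at this
  exact lexLE_antisymm (key e hA hB) (key e.symm hB hA)

theorem isIso_of_mono_of_lexLE_mu {A B : C} (m : A ⟶ B) [Mono m] (hA : Indecomposable A)
    (hB : Indecomposable B) (h : lexLE (mu B) (mu A)) : IsIso m := by
  have hmem := subset_of_lexLE_of_subset (lexLE_trans (lexLE_insert_mu_of_mono hlen hmu m hA hB) h)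
    (Finset.subset_insert _ _) (Finset.mem_insert_self _ _)
  exact isIso_of_mono_of_len_le hlen m (le_len_of_mem_mu hlen hmu hA hmem)

-- The Gabriel-Roiter submodule: the largest proper member of a chain realising `mu B`.
theorem exists_grSubobject {B : C} (hB : Indecomposable B) (h2 : 2 ≤ len B) :
    ∃ w : Subobject B, w ≠ ⊤ ∧ Indecomposable (w : C) ∧ mu (w : C) = (mu B).erase (len B) := by
  classical
  obtain ⟨s, hs, htop, hind, hsmu⟩ := (hmu B hB).1
  set D := (s.erase ⊤).image fun t => len ((t : Subobject B) : C)
  have hmuB : mu B = insert (len B) D := by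
    rw [← hsmu, ← Finset.insert_erase htop, Finset.image_insert,
      len_congr hlen (asIso (⊤ : Subobject B).arrow)]
  have hD : ∀ a ∈ D, a < len B := by
    simp only [D, Finset.mem_image, Finset.mem_erase]
    rintro _ ⟨u, ⟨hu, -⟩, rfl⟩
    exact len_lt_of_ne_top hlen hu
  have hne : (s.erase ⊤).Nonempty := by
    by_contra hne
    have hmuB' : mu B = {len B} := by
      simp [hmuB, D, Finset.not_nonempty_iff_eq_empty.1 hne]
    obtain ⟨P, m, _, hm, hP⟩ := exists_indecomposable_mono_of_two_le_len hlen h2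
    have hsub := subset_of_lexLE_of_subset (hmuB' ▸ lexLE_insert_mu_of_mono hlen hmu m hP hB)
      (by simp)
    have hPB := hsub (Finset.mem_insert_of_mem (len_mem_mu hlen hmu hP))
    exact (len_lt_of_mono_of_not_isIso hlen m hm).ne (Finset.mem_singleton.1 hPB)
  obtain ⟨w, hw⟩ := Finset.exists_maximal hne
  have hgreatest : IsGreatest (s.erase ⊤ : Set (Subobject B)) w := ⟨hw.1, fun u hu =>
    (hs.total (Finset.mem_of_mem_erase hu) (Finset.mem_of_mem_erase hw.1)).elim id (hw.2 hu)⟩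
  have hwtop : w ≠ ⊤ := (Finset.mem_erase.1 hw.1).1
  have hwind : Indecomposable (w : C) := hind w (Finset.mem_of_mem_erase hw.1)
  have hDw : lexLE D (mu (w : C)) := (hmu _ hwind).2 D (isGRChainVal_of_isGreatest hlen
    (hs.mono (Finset.coe_subset.2 (Finset.erase_subset _ _))) hgreatest
    fun t ht => hind t (Finset.mem_of_mem_erase ht))
  have hwD : lexLE (mu (w : C)) D := by
    refine (lexLE_insert_insert_iff (fun h => ?_) fun h => (hD _ h).false).1
      (hmuB ▸ lexLE_insert_mu_of_mono hlen hmu w.arrow hwind hB)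
    exact (le_len_of_mem_mu hlen hmu hwind h).not_gt (len_lt_of_ne_top hlen hwtop)
  refine ⟨w, hwtop, hwind, ?_⟩
  rw [lexLE_antisymm hwD hDw, hmuB, Finset.erase_insert fun h => (hD _ h).false]

end Measure

section MainProperty

variable {len : C → ℕ} (hlen : ∀ Z : C, ObjLength Z (len Z))
  {mu : C → Finset ℕ} (hmu : IsGRMeasure len mu)
  {S : ObjectProperty C}

include hlen hmu

theorem not_mono_grSubobject_comp {M : Finset ℕ}
    (hM : ∀ P, Indecomposable P → S P → lexLE (mu P) M)
    {W : C} (hW : Indecomposable W) {w : Subobject W} (hwtop : w ≠ ⊤)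
    (hwind : Indecomposable (w : C)) (hwmu : mu (w : C) = M.filter (· < len W))
    {P : C} (hP : shortIndecomposables len S (len W) P) (ρ : W ⟶ P) : ¬ Mono (w.arrow ≫ ρ) := by
  obtain ⟨hPind, hPS, hPW⟩ := hP
  intro hmono
  by_cases hlenP : len P ≤ len (w : C)
  · have := isIso_of_mono_of_len_le hlen (w.arrow ≫ ρ) hlenP
    have : IsSplitMono w.arrow :=
      IsSplitMono.mk' ⟨ρ ≫ inv (w.arrow ≫ ρ), by rw [← Category.assoc, IsIso.hom_inv_id]⟩
    exact hwtop ((Subobject.isIso_arrow_iff_eq_top w).1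
      (isIso_of_isSplitMono_of_indecomposable _ hwind.1 hW))
  · have hPM : len P ∉ M := fun h => hlenP <|
      le_len_of_mem_mu hlen hmu hwind (hwmu ▸ Finset.mem_filter.2 ⟨h, hPW⟩)
    refine not_lexLE_insert_filter_lt hPW hPM ?_
    rw [← hwmu]
    exact lexLE_trans (lexLE_insert_mu_of_mono hlen hmu (w.arrow ≫ ρ) hwind hPind)
      (hM P hPind hPS)

variable [S.IsClosedUnderSubobjects]

theorem exists_mono_isSumOf_of_grSubobject {M : Finset ℕ}
    (hM : ∀ P, Indecomposable P → S P → lexLE (mu P) M)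
    {W : C} (hW : Indecomposable W) {w : Subobject W} (hwtop : w ≠ ⊤)
    (hwind : Indecomposable (w : C)) (hwmu : mu (w : C) = M.filter (· < len W))
    {T : C} (hT : IsSumOf (shortIndecomposables len S (len W)) T) (φ : W ⟶ T) [Mono φ] :
    ∃ (T' : C) (ψ : (w : C) ⟶ T'), Mono ψ ∧
      IsSumOf (shortIndecomposables len S (len (w : C))) T' := by
  obtain ⟨T', ψ, m, _, hψ, hT'⟩ := hT.exists_factorization w.arrow (fun P hP ρ =>
    ⟨_, _, _, inferInstance, Abelian.image.fac (w.arrow ≫ ρ),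
      isSumOf_image_of_not_mono hlen S _ hP.2.1
        (not_mono_grSubobject_comp hlen hmu hM hW hwtop hwind hwmu hP ρ)⟩) φ
  have : Mono (ψ ≫ m) := hψ ▸ mono_comp _ _
  exact ⟨T', ψ, mono_of_mono ψ m, hT'⟩

theorem not_mono_of_isSumOf_shortIndecomposables {M : Finset ℕ}
    (hM : ∀ P, Indecomposable P → S P → lexLE (mu P) M)
    {W : C} (hW : Indecomposable W) (hWM : mu W = M.filter (· ≤ len W))
    {T : C} (hT : IsSumOf (shortIndecomposables len S (len W)) T) (φ : W ⟶ T) : ¬ Mono φ := by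
  induction h : len W using Nat.strong_induction_on generalizing W T with
  | _ n ih =>
  intro hφ
  by_cases h2 : len W < 2
  · have hT0 : IsZero T := by
      by_contra hT0
      obtain ⟨P, hP, -, hPW⟩ := hT.exists_of_not_isZero hT0
      exact hP.1 (isZero_of_len_eq_zero hlen (by omega))
    exact hW.1 (hT0.of_mono φ)
  obtain ⟨w, hwtop, hwind, hwmu⟩ := exists_grSubobject hlen hmu hW (by omega)
  have hwlt := len_lt_of_ne_top hlen hwtop
  rw [hWM, erase_filter_le] at hwmu
  obtain ⟨T', ψ, hψ, hT'⟩ :=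
    exists_mono_isSumOf_of_grSubobject hlen hmu hM hW hwtop hwind hwmu hT φ
  refine ih _ (h ▸ hwlt) hwind ?_ hT' ψ rfl hψ
  rw [hwmu]
  exact filter_lt_eq_filter_le hwlt fun a ha => le_len_of_mem_mu hlen hmu hwind (hwmu ▸ ha)

theorem isSplitMono_of_mono {X : C} (hX : Indecomposable X)
    (hM : ∀ P, Indecomposable P → S P → lexLE (mu P) (mu X))
    {U : C} (hU : S U) (f : X ⟶ U) [Mono f] : IsSplitMono f := by
  induction h : len U using Nat.strong_induction_on generalizing U with
  | _ n ih =>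
  by_cases hU0 : IsZero U
  · exact absurd (hU0.of_mono f) hX.1
  by_cases hUind : Indecomposable U
  · have := isIso_of_mono_of_lexLE_mu hlen hmu f hX hUind (hM U hUind hU)
    infer_instance
  obtain ⟨V, W, ⟨e⟩, hV, hW⟩ := exists_biprod_iso_of_not_indecomposable hU0 hUind
  let f' := f ≫ e.hom
  have hSV : S V := S.prop_of_mono (biprod.inl ≫ e.inv) hU
  have hSW : S W := S.prop_of_mono (biprod.inr ≫ e.inv) hU
  by_cases hfV : Mono (f' ≫ biprod.fst)
  · have := ih _ (h ▸ len_lt_of_biprod_iso hlen e hW) hSV (f' ≫ biprod.fst) rfl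
    have := isSplitMono_of_isSplitMono_comp f' biprod.fst
    exact isSplitMono_of_isSplitMono_comp f e.hom
  by_cases hfW : Mono (f' ≫ biprod.snd)
  · have := ih _ (h ▸ len_lt_of_biprod_iso hlen (e ≪≫ biprod.braiding V W) hV) hSW
      (f' ≫ biprod.snd) rfl
    have := isSplitMono_of_isSplitMono_comp f' biprod.snd
    exact isSplitMono_of_isSplitMono_comp f e.hom
  -- `X` embeds into the sum of the images of its two components, both shorter than `X`.
  exact not_mono_of_isSumOf_shortIndecomposables hlen hmu hM hX
    (Finset.filter_true_of_mem fun _ ha => le_len_of_mem_mu hlen hmu hX ha).symm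
    (.biprod (isSumOf_image_of_not_mono hlen S _ hSV hfV)
      (isSumOf_image_of_not_mono hlen S _ hSW hfW) (Iso.refl _)) _
    (mono_biprod_lift_factorThruImage f') |>.elim

end MainProperty

end GabrielRoiter

open GabrielRoiter in
/-- If `X ⊂ Y` is a Gabriel-Roiter inclusion between indecomposables and
`X ⊆ U ⊂ Y` with `U` a proper subobject of `Y`, then `X` is a direct
summand of `U`. -/
theorem grInclusion_summand
    (len : C → ℕ) (hlen : ∀ Z : C, ObjLength Z (len Z))
    (mu : C → Finset ℕ) (hmu : IsGRMeasure len mu)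
    (X Y U : C) (hpred : IsGRPred mu X Y)
    (f : X ⟶ U) (hf : Mono f)
    (g : U ⟶ Y) (hg : Mono g) (hgni : ¬ IsIso g) :
    ∃ Z : C, Nonempty (U ≅ X ⊞ Z) := by
  obtain ⟨hX, -, -, hmax⟩ := hpred
  have hM (P : C) (hP : Indecomposable P) : properSubobjects Y P → lexLE (mu P) (mu X) := by
    rintro ⟨m, _, hm⟩
    have hmk : Subobject.mk m ≠ ⊤ := fun h => hm ((Subobject.isIso_iff_mk_eq_top m).2 h)
    have e := Subobject.underlyingIso m
    rw [mu_congr hlen hmu e.symm hP]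
    exact hmax _ hmk (indecomposable_of_iso e.symm hP)
  have := isSplitMono_of_mono hlen hmu hX hM ⟨g, hg, hgni⟩ f
  exact ⟨_, ⟨biprodIsoOfIsSplitMono f⟩⟩
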